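/- arXiv:2006.07473 — 4 statements merged into one kernel-verified Lean document; each statement's English description precedes it below -/
import Mathlib

section
/- Let A be a real n×n matrix, V a real n×k matrix with orthonormal columns, and set R = A V − V (Vᵀ A V). Let x ∈ ℝⁿ be a nonzero eigenvector of A (A x = λ x), and let R⁺ be the Moore–Penrose pseudoinverse of R, i.e. a k×n matrix P satisfying R P R = R, P R P = P, (R P)ᵀ = R P and (P R)ᵀ = P R. Then for every b ∈ ℝᵏ with R b = 0, the continuation vector t* = P x + b maximizes cos θ(x, Range{V, A V t}) over all t ∈ ℝᵏ; equivalently, for every t ∈ ℝᵏ, the Euclidean distance from x to the subspace span(columns of V ∪ {A V t*}) is less than or equal to the Euclidean distance from x to span(columns of V ∪ {A V t}). -/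
/-!
Since `A V t = R t + V (Vᵀ A V) t`, every subspace `Range{V, A V t}` lies in `Range V + Range R`.
The projectors `V Vᵀ` and `R R⁺` have orthogonal ranges (`Vᵀ R = 0`), so `V Vᵀ x + R R⁺ x` is the
orthogonal projection of `x` onto `Range V + Range R`, its nearest point there. For `t* = R⁺ x + b`
this point already lies in `Range{V, A V t*}`, because `R t* = R R⁺ x`.
-/

open Matrix

section InnerProductSpace

variable {E : Type*} [NormedAddCommGroup E] [InnerProductSpace ℝ E]

theorem dist_le_dist_of_inner_sub_eq_zero {x p y : E} (h : inner ℝ (x - p) (p - y) = 0) :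
    dist x p ≤ dist x y := by
  have pythagoras := norm_add_sq_eq_norm_sq_add_norm_sq_real h
  rw [sub_add_sub_cancel] at pythagoras
  rw [dist_eq_norm, dist_eq_norm]
  exact nonneg_le_nonneg_of_sq_le_sq (norm_nonneg _) (by nlinarith [mul_self_nonneg ‖p - y‖])

theorem infDist_le_infDist_of_inner_sub_eq_zero {x p : E} {s t : Set E} (hp : p ∈ s)
    (ht : t.Nonempty) (h : ∀ y ∈ t, inner ℝ (x - p) (p - y) = 0) :
    Metric.infDist x s ≤ Metric.infDist x t :=
  (Metric.le_infDist ht).2 fun y hy =>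
    (Metric.infDist_le_dist_of_mem hp).trans (dist_le_dist_of_inner_sub_eq_zero (h y hy))

end InnerProductSpace

theorem WithLp.mem_span_range_toLp_col_union_singleton_iff {m l K : Type*} [Fintype l]
    [CommRing K] {p : ENNReal} (V : Matrix m l K) (v : m → K) (y : WithLp p (m → K)) :
    y ∈ Submodule.span K (Set.range (fun j => WithLp.toLp p (V.col j)) ∪ {WithLp.toLp p v}) ↔
      ∃ (c : l → K) (s : K), WithLp.toLp p (V *ᵥ c + s • v) = y := by
  have hcols : Set.range (fun j => WithLp.toLp p (V.col j)) =
      ((WithLp.linearEquiv p K (m → K)).symm : (m → K) →ₗ[K] WithLp p (m → K)) ''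
        Set.range V.col := Set.range_comp _ _
  rw [Submodule.span_union, Submodule.mem_sup, hcols, Submodule.span_image, ← range_mulVecLin]
  simp only [Submodule.mem_map, LinearMap.mem_range, Submodule.mem_span_singleton]
  constructor
  · rintro ⟨_, ⟨_, ⟨c, rfl⟩, rfl⟩, _, ⟨s, rfl⟩, rfl⟩
    exact ⟨c, s, rfl⟩
  · rintro ⟨c, s, rfl⟩
    exact ⟨_, ⟨_, ⟨c, rfl⟩, rfl⟩, _, ⟨s, rfl⟩, rfl⟩

namespace Matrix

variable {α m l : Type*} [CommRing α] [Fintype m] [Fintype l]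

theorem transpose_mul_mul_eq_transpose {R : Matrix m l α} {P : Matrix l m α}
    (h₁ : R * P * R = R) (h₃ : (R * P)ᵀ = R * P) : Rᵀ * R * P = Rᵀ := by
  rw [Matrix.mul_assoc, ← h₃, ← transpose_mul, h₁]

theorem mulVec_add_smul_mulVec_mulVec (A : Matrix m m α) (V : Matrix m l α) (c t : l → α)
    (s : α) : V *ᵥ c + s • A *ᵥ (V *ᵥ t) =
      V *ᵥ (c + s • (Vᵀ * A * V) *ᵥ t) + (A * V - V * (Vᵀ * A * V)) *ᵥ (s • t) := by
  simp only [mulVec_add, mulVec_smul, sub_mulVec, mulVec_mulVec, smul_sub]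
  abel

theorem mulVec_add_mulVec_dotProduct_eq_zero {V R : Matrix m l α} {r : m → α}
    (hV : Vᵀ *ᵥ r = 0) (hR : Rᵀ *ᵥ r = 0) (a b : l → α) : (V *ᵥ a + R *ᵥ b) ⬝ᵥ r = 0 := by
  rw [add_dotProduct, ← vecMul_transpose, ← vecMul_transpose, ← dotProduct_mulVec,
    ← dotProduct_mulVec, hV, hR, dotProduct_zero, dotProduct_zero, add_zero]

theorem transpose_mul_sub_mul_transpose_mul_eq_zero [DecidableEq l] {V : Matrix m l α}
    (hV : Vᵀ * V = 1) (B : Matrix m l α) : Vᵀ * (B - V * (Vᵀ * B)) = 0 := by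
  rw [Matrix.mul_sub, ← Matrix.mul_assoc, hV, Matrix.one_mul, sub_self]

theorem mulVec_add_mulVec_dotProduct_sub_eq_zero [DecidableEq l] {V R : Matrix m l α}
    {P : Matrix l m α} (hV : Vᵀ * V = 1) (hVR : Vᵀ * R = 0) (hRP : Rᵀ * R * P = Rᵀ)
    (x : m → α) (a b : l → α) :
    (V *ᵥ a + R *ᵥ b) ⬝ᵥ (x - (V *ᵥ (Vᵀ *ᵥ x) + R *ᵥ (P *ᵥ x))) = 0 := by
  have hRV : Rᵀ * V = 0 := by rw [← transpose_transpose V, ← transpose_mul, hVR, transpose_zero]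
  refine mulVec_add_mulVec_dotProduct_eq_zero ?_ ?_ a b <;>
    simp only [mulVec_sub, mulVec_add, mulVec_mulVec, ← Matrix.mul_assoc, hV, hVR, hRV, hRP,
      Matrix.one_mul, Matrix.zero_mul, zero_mulVec, add_zero, zero_add, sub_self]

end Matrix

theorem optimal_continuation_vector_general
    {n k : ℕ} (A : Matrix (Fin n) (Fin n) ℝ) (V : Matrix (Fin n) (Fin k) ℝ)
    (hV : Vᵀ * V = 1)
    (R : Matrix (Fin n) (Fin k) ℝ) (hR : R = A * V - V * (Vᵀ * A * V))
    (x : Fin n → ℝ)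
    (P : Matrix (Fin k) (Fin n) ℝ)
    (hP1 : R * P * R = R)
    (hP3 : (R * P)ᵀ = R * P)
    (b : Fin k → ℝ) (hb : R.mulVec b = 0)
    (tstar : Fin k → ℝ) (htstar : tstar = P.mulVec x + b)
    -- the subspace spanned by the columns of `V` together with `A V t`,
    -- viewed inside Euclidean space
    (S : (Fin k → ℝ) → Submodule ℝ (EuclideanSpace ℝ (Fin n)))
    (hS : ∀ t, S t = Submodule.span ℝ
        ((Set.range fun j : Fin k =>
            (WithLp.equiv 2 (Fin n → ℝ)).symm (fun i => V i j)) ∪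
          {(WithLp.equiv 2 (Fin n → ℝ)).symm (A.mulVec (V.mulVec t))})) :
    ∀ t : Fin k → ℝ,
      Metric.infDist ((WithLp.equiv 2 (Fin n → ℝ)).symm x)
          (S tstar : Set (EuclideanSpace ℝ (Fin n)))
        ≤ Metric.infDist ((WithLp.equiv 2 (Fin n → ℝ)).symm x)
          (S t : Set (EuclideanSpace ℝ (Fin n))) := by
  intro t
  have hVR : Vᵀ * R = 0 := by
    rw [hR, Matrix.mul_assoc Vᵀ A V]
    exact transpose_mul_sub_mul_transpose_mul_eq_zero hV (A * V)
  have hspan := hR ▸ mulVec_add_smul_mulVec_mulVec A V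
  refine infDist_le_infDist_of_inner_sub_eq_zero
    (p := WithLp.toLp 2 (V *ᵥ (Vᵀ *ᵥ x) + R *ᵥ (P *ᵥ x))) ?_ ⟨0, (S t).zero_mem⟩ ?_
  · rw [hS, SetLike.mem_coe]
    refine (WithLp.mem_span_range_toLp_col_union_singleton_iff V _ _).2
      ⟨Vᵀ *ᵥ x - (Vᵀ * A * V) *ᵥ tstar, 1, ?_⟩
    rw [hspan, one_smul, sub_add_cancel, one_smul, htstar, mulVec_add, hb, add_zero]
  · intro y hy
    rw [hS, SetLike.mem_coe] at hy
    obtain ⟨c, s, rfl⟩ := (WithLp.mem_span_range_toLp_col_union_singleton_iff V _ _).1 hy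
    rw [hspan, ← WithLp.toLp_sub, ← WithLp.toLp_sub, EuclideanSpace.inner_toLp_toLp, star_trivial,
      add_sub_add_comm, ← mulVec_sub, ← mulVec_sub]
    exact mulVec_add_mulVec_dotProduct_sub_eq_zero hV hVR (transpose_mul_mul_eq_transpose hP1 hP3)
      x _ _

/-- With `R = A V - V (Vᵀ A V)`, `x` a nonzero eigenvector of `A`,
`P` the Moore–Penrose pseudoinverse of `R` (characterized by the four Penrose
equations), and `b` in the nullspace of `R`, the continuation vector
`t* = P x + b` maximizes `cos θ(x, Range{V, A V t})`; equivalently, it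
minimizes the Euclidean distance from `x` to the subspace spanned by the
columns of `V` together with `A V t`. -/
theorem optimal_continuation_vector
    {n k : ℕ} (A : Matrix (Fin n) (Fin n) ℝ) (V : Matrix (Fin n) (Fin k) ℝ)
    (hV : Vᵀ * V = 1)
    (R : Matrix (Fin n) (Fin k) ℝ) (hR : R = A * V - V * (Vᵀ * A * V))
    (lam : ℝ) (x : Fin n → ℝ) (hx : A.mulVec x = lam • x) (hx0 : x ≠ 0)
    (P : Matrix (Fin k) (Fin n) ℝ)
    (hP1 : R * P * R = R) (hP2 : P * R * P = P)
    (hP3 : (R * P)ᵀ = R * P) (hP4 : (P * R)ᵀ = P * R)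
    (b : Fin k → ℝ) (hb : R.mulVec b = 0)
    (tstar : Fin k → ℝ) (htstar : tstar = P.mulVec x + b)
    -- the subspace spanned by the columns of `V` together with `A V t`,
    -- viewed inside Euclidean space
    (S : (Fin k → ℝ) → Submodule ℝ (EuclideanSpace ℝ (Fin n)))
    (hS : ∀ t, S t = Submodule.span ℝ
        ((Set.range fun j : Fin k =>
            (WithLp.equiv 2 (Fin n → ℝ)).symm (fun i => V i j)) ∪
          {(WithLp.equiv 2 (Fin n → ℝ)).symm (A.mulVec (V.mulVec t))})) :
    ∀ t : Fin k → ℝ,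
      Metric.infDist ((WithLp.equiv 2 (Fin n → ℝ)).symm x)
          (S tstar : Set (EuclideanSpace ℝ (Fin n)))
        ≤ Metric.infDist ((WithLp.equiv 2 (Fin n → ℝ)).symm x)
          (S t : Set (EuclideanSpace ℝ (Fin n))) :=
  optimal_continuation_vector_general A V hV R hR x P hP1 hP3 b hb tstar htstar S hS
end

section
/- Let A be a nonzero real n×n matrix, V a real n×k matrix with orthonormal columns (Vᵀ V = I), r ∈ ℝⁿ, e₁ ∈ ℝᵏ, e₂ ∈ ℝⁿ, and η ≥ 0. Set e₁⊥ = (I − V Vᵀ) A V e₁ and e = e₁⊥ + e₂. If ‖e₁‖ ≤ η‖r‖ / (2‖A‖) and ‖e₂‖ ≤ (η/(2+η))·‖r + e₁⊥‖, then ‖e‖ ≤ η·‖r‖. -/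
/-! Since `Vᵀ V = 1`, `V` is an isometry and `I - V Vᵀ` an orthogonal projection, hence a
contraction, so `‖e₁⊥‖ ≤ ‖A‖ ‖e₁‖ ≤ η ‖r‖ / 2`. Then `‖r + e₁⊥‖ ≤ (2 + η) ‖r‖ / 2`, which makes
`‖e₂‖ ≤ η ‖r‖ / 2`, and the triangle inequality gives `‖e‖ ≤ η ‖r‖`. -/

open Matrix WithLp

section

variable {m k : Type*} [Fintype m] [Fintype k]

lemma norm_toLp_mulVec_of_transpose_mul_self [DecidableEq k] {V : Matrix m k ℝ}
    (hV : Vᵀ * V = 1) (x : k → ℝ) : ‖toLp 2 (V *ᵥ x)‖ = ‖toLp 2 x‖ := by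
  have hsq : ‖toLp 2 (V *ᵥ x)‖ ^ 2 = ‖toLp 2 x‖ ^ 2 := by
    simp only [← real_inner_self_eq_norm_sq, EuclideanSpace.inner_toLp_toLp, star_trivial,
      dotProduct_mulVec, ← mulVec_transpose, mulVec_mulVec, hV, one_mulVec]
  exact (pow_left_inj₀ (norm_nonneg _) (norm_nonneg _) two_ne_zero).mp hsq

lemma isStarProjection_one_sub_mul_transpose [DecidableEq m] [DecidableEq k]
    {V : Matrix m k ℝ} (hV : Vᵀ * V = 1) : IsStarProjection (1 - V * Vᵀ) := by
  refine IsStarProjection.one_sub ⟨?_, ?_⟩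
  · rw [IsIdempotentElem, Matrix.mul_assoc, ← Matrix.mul_assoc Vᵀ, hV, Matrix.one_mul]
  · rw [IsSelfAdjoint, star_eq_conjTranspose, conjTranspose_eq_transpose_of_trivial,
      transpose_mul, transpose_transpose]

lemma norm_toLp_mulVec_le_of_isStarProjection {𝕜 : Type*} [RCLike 𝕜] [DecidableEq m]
    {P : Matrix m m 𝕜} (hP : IsStarProjection P) (x : m → 𝕜) :
    ‖toLp 2 (P *ᵥ x)‖ ≤ ‖toLp 2 x‖ := by
  simpa [toEuclideanCLM_toLp] using (toEuclideanCLM (n := m) (𝕜 := 𝕜) P).le_of_opNorm_le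
    ((hP.map (toEuclideanCLM (n := m) (𝕜 := 𝕜))).norm_le) (toLp 2 x)

lemma norm_toLp_one_sub_mul_transpose_mulVec_mul_le [DecidableEq m] [DecidableEq k]
    (A : Matrix m m ℝ) {V : Matrix m k ℝ} (hV : Vᵀ * V = 1) (x : k → ℝ) :
    ‖toLp 2 ((1 - V * Vᵀ) *ᵥ ((A * V) *ᵥ x))‖ ≤ ‖toEuclideanCLM (𝕜 := ℝ) A‖ * ‖toLp 2 x‖ :=
  calc ‖toLp 2 ((1 - V * Vᵀ) *ᵥ ((A * V) *ᵥ x))‖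
      ≤ ‖toLp 2 (A *ᵥ (V *ᵥ x))‖ := by
        rw [← mulVec_mulVec]
        exact norm_toLp_mulVec_le_of_isStarProjection
          (isStarProjection_one_sub_mul_transpose hV) _
    _ ≤ ‖toEuclideanCLM (𝕜 := ℝ) A‖ * ‖toLp 2 (V *ᵥ x)‖ :=
        (toEuclideanCLM (𝕜 := ℝ) A).le_opNorm (toLp 2 (V *ᵥ x))
    _ = ‖toEuclideanCLM (𝕜 := ℝ) A‖ * ‖toLp 2 x‖ := by
        rw [norm_toLp_mulVec_of_transpose_mul_self hV]

end

lemma mul_div_two_mul_le {N x : ℝ} (hx : 0 ≤ x) : N * (x / (2 * N)) ≤ x / 2 := by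
  rcases eq_or_ne N 0 with rfl | hN
  · rw [zero_mul]
    positivity
  · exact (by field_simp : N * (x / (2 * N)) = x / 2).le

lemma add_le_mul_of_le_half_of_le_div_two_add_mul {η R a b : ℝ} (hη : 0 ≤ η)
    (ha : a ≤ η * R / 2) (hb : b ≤ η / (2 + η) * (R + a)) : a + b ≤ η * R := by
  have hb' : b ≤ η / (2 + η) * (R + η * R / 2) := hb.trans (by gcongr)
  have h_eq : η / (2 + η) * (R + η * R / 2) = η * R / 2 := by
    field_simp
  linarith

theorem total_error_bound_general
    {n k : ℕ} (A : Matrix (Fin n) (Fin n) ℝ)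
    (V : Matrix (Fin n) (Fin k) ℝ) (hV : Vᵀ * V = 1)
    (r : Fin n → ℝ) (e₁ : Fin k → ℝ) (e₂ : Fin n → ℝ)
    (η : ℝ) (hη : 0 ≤ η)
    (e₁perp : Fin n → ℝ)
    (he₁perp : e₁perp
      = ((1 : Matrix (Fin n) (Fin n) ℝ) - V * Vᵀ).mulVec ((A * V).mulVec e₁))
    (e : Fin n → ℝ) (he : e = e₁perp + e₂)
    (h1 : ‖(WithLp.equiv 2 (Fin k → ℝ)).symm e₁‖
      ≤ η * ‖(WithLp.equiv 2 (Fin n → ℝ)).symm r‖ /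
          (2 * ‖Matrix.toEuclideanCLM (𝕜 := ℝ) A‖))
    (h2 : ‖(WithLp.equiv 2 (Fin n → ℝ)).symm e₂‖
      ≤ (η / (2 + η)) * ‖(WithLp.equiv 2 (Fin n → ℝ)).symm (r + e₁perp)‖) :
    ‖(WithLp.equiv 2 (Fin n → ℝ)).symm e‖
      ≤ η * ‖(WithLp.equiv 2 (Fin n → ℝ)).symm r‖ := by
  simp only [WithLp.equiv_symm_apply, toLp_add] at h1 h2 ⊢
  have hR : 0 ≤ η * ‖toLp 2 r‖ := by positivity
  have h_perp : ‖toLp 2 e₁perp‖ ≤ η * ‖toLp 2 r‖ / 2 := by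
    rw [he₁perp]
    exact (norm_toLp_one_sub_mul_transpose_mulVec_mul_le A hV e₁).trans
      ((mul_le_mul_of_nonneg_left h1 (norm_nonneg _)).trans (mul_div_two_mul_le hR))
  have h_e₂ : ‖toLp 2 e₂‖ ≤ η / (2 + η) * (‖toLp 2 r‖ + ‖toLp 2 e₁perp‖) :=
    h2.trans (by gcongr; exact norm_add_le _ _)
  calc ‖toLp 2 e‖ ≤ ‖toLp 2 e₁perp‖ + ‖toLp 2 e₂‖ := by
        rw [he, toLp_add]
        exact norm_add_le _ _
    _ ≤ η * ‖toLp 2 r‖ := add_le_mul_of_le_half_of_le_div_two_add_mul hη h_perp h_e₂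

/-- For a nonzero matrix `A` and `V` with orthonormal columns,
if `‖e₁‖ ≤ η‖r‖/(2‖A‖)` and `‖e₂‖ ≤ (η/(2+η))‖r + e₁⊥‖`, where
`e₁⊥ = (I - V Vᵀ) A V e₁`, then the total error `e = e₁⊥ + e₂` satisfies
`‖e‖ ≤ η‖r‖`.  Here `‖A‖` is the spectral operator norm and vector norms
are Euclidean. -/
theorem total_error_bound
    {n k : ℕ} (A : Matrix (Fin n) (Fin n) ℝ) (hA : A ≠ 0)
    (V : Matrix (Fin n) (Fin k) ℝ) (hV : Vᵀ * V = 1)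
    (r : Fin n → ℝ) (e₁ : Fin k → ℝ) (e₂ : Fin n → ℝ)
    (η : ℝ) (hη : 0 ≤ η)
    (e₁perp : Fin n → ℝ)
    (he₁perp : e₁perp
      = ((1 : Matrix (Fin n) (Fin n) ℝ) - V * Vᵀ).mulVec ((A * V).mulVec e₁))
    (e : Fin n → ℝ) (he : e = e₁perp + e₂)
    (h1 : ‖(WithLp.equiv 2 (Fin k → ℝ)).symm e₁‖
      ≤ η * ‖(WithLp.equiv 2 (Fin n → ℝ)).symm r‖ /
          (2 * ‖Matrix.toEuclideanCLM (𝕜 := ℝ) A‖))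
    (h2 : ‖(WithLp.equiv 2 (Fin n → ℝ)).symm e₂‖
      ≤ (η / (2 + η)) * ‖(WithLp.equiv 2 (Fin n → ℝ)).symm (r + e₁perp)‖) :
    ‖(WithLp.equiv 2 (Fin n → ℝ)).symm e‖
      ≤ η * ‖(WithLp.equiv 2 (Fin n → ℝ)).symm r‖ :=
  total_error_bound_general A V hV r e₁ e₂ η hη e₁perp he₁perp e he h1 h2
end

section
/- Let A₀ be an invertible real n×n matrix, u_1, …, u_m and q_1, …, q_m vectors in ℝⁿ, c₀ ≠ 0 and c_1, …, c_m real scalars, and suppose M = c₀ A₀ + Σ_{i=1}^m c_i u_i q_iᵀ is invertible. Then for every q ∈ ℝⁿ, the vector M⁻¹ q lies in the span of the m+1 vectors A₀⁻¹ q, A₀⁻¹ u_1, A₀⁻¹ u_2, …, A₀⁻¹ u_m. -/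
open Matrix

lemma sum_mulVec' {n : ℕ} {ι : Type*} (s : Finset ι) (A : ι → Matrix (Fin n) (Fin n) ℝ)
    (x : Fin n → ℝ) : (∑ i ∈ s, A i).mulVec x = ∑ i ∈ s, (A i).mulVec x := by
  ext k
  simp [mulVec, dotProduct, Matrix.sum_apply, Finset.sum_mul]
  rw [Finset.sum_comm]

lemma mulVec_sum' {n : ℕ} {ι : Type*} (s : Finset ι) (A : Matrix (Fin n) (Fin n) ℝ)
    (x : ι → Fin n → ℝ) : A.mulVec (∑ i ∈ s, x i) = ∑ i ∈ s, A.mulVec (x i) := by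
  ext k
  simp [mulVec, dotProduct, Finset.mul_sum]
  rw [Finset.sum_comm]

lemma vecMulVec_mulVec' {n : ℕ} (w v x : Fin n → ℝ) :
    (vecMulVec w v).mulVec x = (v ⬝ᵥ x) • w := by
  ext k
  simp [vecMulVec_apply, mulVec, dotProduct, Finset.mul_sum, mul_assoc, mul_comm, mul_left_comm]

/-- Sherman–Morrison–Woodbury structure: if
`M = c₀ A₀ + Σ_i c_i u_i q_iᵀ` is invertible with `A₀` invertible and
`c₀ ≠ 0`, then for every `q` the vector `M⁻¹ q` lies in the span of
`A₀⁻¹ q, A₀⁻¹ u₁, …, A₀⁻¹ u_m`. -/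
theorem inverse_in_fixed_subspace
    {n m : ℕ}
    (A₀ : Matrix (Fin n) (Fin n) ℝ) (hA₀ : IsUnit A₀.det)
    (u q' : Fin m → Fin n → ℝ)
    (c₀ : ℝ) (hc₀ : c₀ ≠ 0) (c : Fin m → ℝ)
    (M : Matrix (Fin n) (Fin n) ℝ)
    (hM : M = c₀ • A₀ + ∑ i : Fin m, c i • vecMulVec (u i) (q' i))
    (hMinv : IsUnit M.det) :
    ∀ q : Fin n → ℝ,
      M⁻¹.mulVec q ∈ Submodule.span ℝ
        ({A₀⁻¹.mulVec q} ∪ Set.range (fun i : Fin m => A₀⁻¹.mulVec (u i))) := by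
  intro q
  set x : Fin n → ℝ := M⁻¹.mulVec q with hx
  have hq : M.mulVec x = q := by
    rw [hx, mulVec_mulVec, mul_nonsing_inv M hMinv, one_mulVec]
  have hMx : M.mulVec x = c₀ • A₀.mulVec x + ∑ i : Fin m, (c i * (q' i ⬝ᵥ x)) • u i := by
    rw [hM, add_mulVec, sum_mulVec', smul_mulVec]
    congr 1
    refine Finset.sum_congr rfl fun i _ => ?_
    rw [smul_mulVec, vecMulVec_mulVec', smul_smul]
  have hAx : A₀.mulVec x = c₀⁻¹ • (q - ∑ i : Fin m, (c i * (q' i ⬝ᵥ x)) • u i) := by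
    rw [← hq, hMx]
    rw [smul_sub, smul_add, add_sub_cancel_right, smul_smul, inv_mul_cancel₀ hc₀, one_smul]
  have hxval : x = A₀⁻¹.mulVec (A₀.mulVec x) := by
    rw [mulVec_mulVec, nonsing_inv_mul A₀ hA₀, one_mulVec]
  rw [hxval, hAx]
  have h1 : A₀⁻¹.mulVec (c₀⁻¹ • (q - ∑ i : Fin m, (c i * (q' i ⬝ᵥ x)) • u i))
      = c₀⁻¹ • A₀⁻¹.mulVec q
        - ∑ i : Fin m, (c₀⁻¹ * (c i * (q' i ⬝ᵥ x))) • A₀⁻¹.mulVec (u i) := by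
    rw [mulVec_smul, mulVec_sub, smul_sub]
    congr 1
    rw [mulVec_sum', Finset.smul_sum]
    refine Finset.sum_congr rfl fun i _ => ?_
    rw [mulVec_smul, smul_smul]
  rw [h1]
  refine Submodule.sub_mem _ ?_ ?_
  · exact Submodule.smul_mem _ _ (Submodule.subset_span (Or.inl rfl))
  · exact Submodule.sum_mem _ fun i _ =>
      Submodule.smul_mem _ _ (Submodule.subset_span (Or.inr ⟨i, rfl⟩))
end

section
/- Let A be a real n×n matrix, u ∈ ℝⁿ, k ≥ 1, and let v_1, …, v_k ∈ ℝⁿ be vectors such that for every j with 1 ≤ j ≤ k, span{v_1, …, v_j} = span{u, A u, …, A^{j−1} u}. Let t ∈ ℝᵏ be any vector whose last entry t_k is nonzero, and set w = A(t_1 v_1 + ⋯ + t_k v_k) (that is, w = A V t where V has columns v_1, …, v_k). Then span{v_1, …, v_k, w} = span{u, A u, …, A^k u}; in particular the expanded subspace, and hence the Ritz values obtained from it, do not depend on the choice of the continuation vector t as long as its last entry is nonzero. -/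
open Matrix

/-- If `v₁, …, v_k` are such that for every `j ≤ k` the span of
`v₁, …, v_j` equals the Krylov space `span{u, Au, …, A^{j-1}u}`, and `t ∈ ℝᵏ`
has nonzero last entry, then expanding with `w = A V t` yields
`span{v₁,…,v_k, w} = span{u, Au, …, A^k u}`: the expanded subspace (and hence
the Ritz values) does not depend on the choice of the continuation vector. -/
theorem continuation_vector_independence
    {n k : ℕ} (hk : 1 ≤ k)
    (A : Matrix (Fin n) (Fin n) ℝ) (u : Fin n → ℝ)
    (v : Fin k → Fin n → ℝ)
    (hv : ∀ j : Fin k,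
      Submodule.span ℝ {w : Fin n → ℝ | ∃ i : Fin k, i ≤ j ∧ w = v i}
        = Submodule.span ℝ
            {w : Fin n → ℝ | ∃ i : Fin k, i ≤ j ∧ w = (A ^ (i : ℕ)).mulVec u})
    (t : Fin k → ℝ) (ht : t ⟨k - 1, by omega⟩ ≠ 0)
    (w : Fin n → ℝ) (hw : w = A.mulVec (∑ i : Fin k, t i • v i)) :
    Submodule.span ℝ (Set.range v ∪ {w})
      = Submodule.span ℝ
          (Set.range fun i : Fin (k + 1) => (A ^ (i : ℕ)).mulVec u) := by
  have hk0 : 0 < k := hk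
  let last : Fin k := ⟨k - 1, by omega⟩
  have ht' : t last ≠ 0 := ht
  have hall : ∀ i : Fin k, i ≤ last := by
    intro i
    rw [Fin.le_def]
    show (i : ℕ) ≤ k - 1
    omega
  have hsetV : {x : Fin n → ℝ | ∃ i : Fin k, i ≤ last ∧ x = v i} = Set.range v := by
    ext x
    simp only [Set.mem_setOf_eq, Set.mem_range]
    constructor
    · rintro ⟨i, _, rfl⟩; exact ⟨i, rfl⟩
    · rintro ⟨i, rfl⟩; exact ⟨i, hall i, rfl⟩
  have hspanV : Submodule.span ℝ (Set.range v)
      = Submodule.span ℝ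
          {x : Fin n → ℝ | ∃ i : Fin k, i ≤ last ∧ x = (A ^ (i : ℕ)).mulVec u} := by
    rw [← hsetV]; exact hv last
  set S := Submodule.span ℝ (Set.range v ∪ {w}) with hS
  have hVS : Submodule.span ℝ (Set.range v) ≤ S :=
    Submodule.span_mono Set.subset_union_left
  have hwS : w ∈ S := Submodule.subset_span (Or.inr rfl)
  -- A maps v i into span (range v) for i < last
  have hmap : ∀ i : Fin k, (i : ℕ) + 1 ≤ k - 1 →
      A.mulVec (v i) ∈ Submodule.span ℝ (Set.range v) := by
    intro i hi
    have hvi : v i ∈ Submodule.span ℝ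
        {x : Fin n → ℝ | ∃ j : Fin k, j ≤ i ∧ x = (A ^ (j : ℕ)).mulVec u} := by
      rw [← hv i]
      exact Submodule.subset_span ⟨i, le_refl i, rfl⟩
    have hm := Submodule.mem_map_of_mem (f := A.mulVecLin) hvi
    rw [Submodule.map_span] at hm
    refine Submodule.span_le.2 ?_ hm
    rintro x ⟨y, ⟨j, hj, rfl⟩, rfl⟩
    rw [hspanV]
    apply Submodule.subset_span
    have hjlt : (j : ℕ) + 1 < k := by
      have := Fin.le_def.1 hj
      omega
    refine ⟨⟨(j : ℕ) + 1, hjlt⟩, ?_, ?_⟩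
    · rw [Fin.le_def]
      show (j : ℕ) + 1 ≤ k - 1
      have := Fin.le_def.1 hj
      omega
    · show A.mulVecLin ((A ^ (j : ℕ)).mulVec u) = (A ^ ((j : ℕ) + 1)).mulVec u
      rw [pow_succ', Matrix.mulVecLin_apply, Matrix.mulVec_mulVec]
  -- w as a sum
  have hw' : w = ∑ j : Fin k, t j • A.mulVec (v j) := by
    simp only [hw, ← Matrix.mulVecLin_apply, map_sum, LinearMap.map_smul]
  -- A maps every v i into S
  have hAvS : ∀ i : Fin k, A.mulVec (v i) ∈ S := by
    have hne : ∀ i : Fin k, i ≠ last → A.mulVec (v i) ∈ S := by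
      intro i hi
      refine hVS (hmap i ?_)
      have : (i : ℕ) ≠ k - 1 := fun h => hi (Fin.ext h)
      omega
    intro i
    by_cases hi : i = last
    · have hti : t i ≠ 0 := by rw [hi]; exact ht'
      have hsum : ∑ j ∈ Finset.univ.erase i, t j • A.mulVec (v j) ∈ S :=
        Submodule.sum_mem _ fun j hj =>
          Submodule.smul_mem _ _ (hne j (hi ▸ Finset.ne_of_mem_erase hj))
      have hlm : t i • A.mulVec (v i) ∈ S := by
        have heq : t i • A.mulVec (v i)
            = w - ∑ j ∈ Finset.univ.erase i, t j • A.mulVec (v j) := by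
          rw [hw', ← Finset.add_sum_erase _ _ (Finset.mem_univ i)]
          abel
        rw [heq]
        exact Submodule.sub_mem _ hwS hsum
      have := Submodule.smul_mem S (t i)⁻¹ hlm
      rwa [inv_smul_smul₀ hti] at this
    · exact hne i hi
  -- A maps span (range v) into the big Krylov space
  have hAK : ∀ x ∈ Submodule.span ℝ (Set.range v),
      A.mulVec x ∈ Submodule.span ℝ
        (Set.range fun i : Fin (k + 1) => (A ^ (i : ℕ)).mulVec u) := by
    intro x hx
    rw [hspanV] at hx
    have hm := Submodule.mem_map_of_mem (f := A.mulVecLin) hx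
    rw [Submodule.map_span] at hm
    refine Submodule.span_le.2 ?_ hm
    rintro y ⟨z, ⟨j, hj, rfl⟩, rfl⟩
    apply Submodule.subset_span
    refine ⟨⟨(j : ℕ) + 1, by omega⟩, ?_⟩
    show (A ^ ((j : ℕ) + 1)).mulVec u = A.mulVecLin ((A ^ (j : ℕ)).mulVec u)
    rw [pow_succ', Matrix.mulVecLin_apply, Matrix.mulVec_mulVec]
  have hKle : Submodule.span ℝ
        {x : Fin n → ℝ | ∃ i : Fin k, i ≤ last ∧ x = (A ^ (i : ℕ)).mulVec u}
      ≤ Submodule.span ℝ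
          (Set.range fun i : Fin (k + 1) => (A ^ (i : ℕ)).mulVec u) := by
    apply Submodule.span_le.2
    rintro x ⟨j, _, rfl⟩
    exact Submodule.subset_span ⟨⟨(j : ℕ), by omega⟩, rfl⟩
  apply le_antisymm
  · apply Submodule.span_le.2
    rintro x (⟨i, rfl⟩ | hx)
    · exact hKle (hspanV ▸ Submodule.subset_span ⟨i, rfl⟩)
    · rcases hx with rfl
      rw [hw']
      exact Submodule.sum_mem _ fun j _ =>
        Submodule.smul_mem _ _ (hAK (v j) (Submodule.subset_span ⟨j, rfl⟩))
  · apply Submodule.span_le.2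
    rintro x ⟨i, rfl⟩
    simp only
    by_cases hi : (i : ℕ) < k
    · have hx : (A ^ (i : ℕ)).mulVec u ∈ Submodule.span ℝ (Set.range v) := by
        rw [hspanV]
        exact Submodule.subset_span ⟨⟨(i : ℕ), hi⟩, hall _, rfl⟩
      exact hVS hx
    · have hik : (i : ℕ) = k := by omega
      have hx : (A ^ (k - 1)).mulVec u ∈ Submodule.span ℝ (Set.range v) := by
        rw [hspanV]
        exact Submodule.subset_span ⟨last, le_refl _, rfl⟩
      have hm := Submodule.mem_map_of_mem (f := A.mulVecLin) hx
      rw [Submodule.map_span] at hm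
      have hle2 : Submodule.span ℝ (A.mulVecLin '' Set.range v) ≤ S := by
        apply Submodule.span_le.2
        rintro y ⟨z, ⟨j, rfl⟩, rfl⟩
        exact hAvS j
      have hxS := hle2 hm
      rw [Matrix.mulVecLin_apply, Matrix.mulVec_mulVec] at hxS
      have hpow : A ^ (i : ℕ) = A * A ^ (k - 1) := by
        rw [hik]
        conv_lhs => rw [show k = (k - 1) + 1 by omega]
        rw [pow_succ']
      rw [hpow]
      exact hxS
end
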